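/- For every real constant κ there exist finite sets X, Y, Z, a probability distribution P on X×Y×Z, and a classical channel R from Y to Y×Z satisfying R(P_Y) = P_YZ, such that κ · D_max( P ‖ (id⊗R)(P_XY) ) < I(X:Z|Y)_P. -/

import Mathlib

noncomputable section

namespace CIT

/-- A probability distribution on a finite set. -/
def IsDist {X : Type*} [Fintype X] (p : X → ℝ) : Prop :=
  (∀ x, 0 ≤ p x) ∧ ∑ x, p x = 1

/-- Support inclusion `supp p ⊆ supp q`. -/
def suppLe {X : Type*} (p q : X → ℝ) : Prop := ∀ x, p x ≠ 0 → q x ≠ 0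

open Classical in
/-- Relative entropy (base 2), with `0·log 0 = 0`, `+∞` if the support
condition fails. -/
def relEnt {X : Type*} [Fintype X] (p q : X → ℝ) : EReal :=
  if suppLe p q then ((∑ x, p x * Real.logb 2 (p x / q x) : ℝ) : EReal) else ⊤

open Classical in
/-- Max-relative entropy `D_max(p‖q) = log max_{x ∈ supp p} p(x)/q(x)`,
`+∞` if the support condition fails. -/
def dMax {X : Type*} [Fintype X] (p q : X → ℝ) : EReal :=
  if suppLe p q then
    ((Real.logb 2 (sSup {r : ℝ | ∃ x, p x ≠ 0 ∧ r = p x / q x}) : ℝ) : EReal)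
  else ⊤

open Classical in
/-- Rényi relative entropy of order `α` (base 2), with `D_1 := D` and `+∞`
when `α > 1` and the support condition fails. -/
def renyi {X : Type*} [Fintype X] (α : ℝ) (p q : X → ℝ) : EReal :=
  if α = 1 then relEnt p q
  else if 1 < α ∧ ¬ suppLe p q then ⊤
  else (((α - 1)⁻¹ * Real.logb 2 (∑ x, p x ^ α * q x ^ (1 - α)) : ℝ) : EReal)

/-- The `XY`-marginal of a tripartite distribution. -/
def margXY {X Y Z : Type*} [Fintype Z] (P : X × Y × Z → ℝ) : X × Y → ℝ :=
  fun t => ∑ z, P (t.1, t.2, z)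

/-- The `YZ`-marginal of a tripartite distribution. -/
def margYZ {X Y Z : Type*} [Fintype X] (P : X × Y × Z → ℝ) : Y × Z → ℝ :=
  fun t => ∑ x, P (x, t.1, t.2)

/-- The `Y`-marginal of a tripartite distribution. -/
def margY {X Y Z : Type*} [Fintype X] [Fintype Z] (P : X × Y × Z → ℝ) : Y → ℝ :=
  fun y => ∑ x, ∑ z, P (x, y, z)

/-- Conditional mutual information
`I(X:Z|Y)_P = Σ P(x,y,z) log( P(x,y,z)·P_Y(y) / (P_XY(x,y)·P_YZ(y,z)) )`. -/
def cmi {X Y Z : Type*} [Fintype X] [Fintype Y] [Fintype Z] (P : X × Y × Z → ℝ) : ℝ :=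
  ∑ s : X × Y × Z,
    P s * Real.logb 2 (P s * margY P s.2.1 / (margXY P (s.1, s.2.1) * margYZ P (s.2.1, s.2.2)))

/-- A classical channel from `Y` to `W`: a family of conditional distributions. -/
def IsChannel {Y W : Type*} [Fintype W] (R : Y → W → ℝ) : Prop :=
  ∀ y, (∀ w, 0 ≤ R y w) ∧ ∑ w, R y w = 1

/-- Action `(id ⊗ R)` of a channel `R : Y → W` on a joint distribution on `X × Y`. -/
def applyChan {X Y W : Type*} [Fintype Y] (R : Y → W → ℝ) (P : X × Y → ℝ) : X × W → ℝ :=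
  fun t => ∑ y, P (t.1, y) * R y t.2

/-- Action of a channel `R : Y → W` on a distribution on `Y`. -/
def chanOnDist {Y W : Type*} [Fintype Y] (R : Y → W → ℝ) (q : Y → ℝ) : W → ℝ :=
  fun w => ∑ y, q y * R y w

/-- Marginal channel `R_{Y→Y}(y'|y) = Σ_{z'} R(y',z'|y)`. -/
def margChan {Y Y' Z' : Type*} [Fintype Z'] (R : Y → Y' × Z' → ℝ) : Y → Y' → ℝ :=
  fun y y' => ∑ z', R y (y', z')

end CIT

/-!
Let `X` be uniform on `d` letters, let `Y` be `X` erased with probability `1/(d+1)` (so that `Y`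
is uniform on `d+1` letters) and let `Z = X`. Then `I(X:Z|Y) = H(X|Y) = log d / (d+1)`.
The recovery map keeps an unerased `y` as `Z` and erases `Y` with probability `1/d`, and replaces
an erased `y` by a uniformly random unerased letter, copied into `Z`; it maps `P_Y` exactly to
`P_YZ`. The recovered distribution differs from `P` by a factor at most
`d²/(d²-d+1) = 1 + O(1/d)`, so `D_max = O(1/d)`, which for large `d` is smaller than
`log d / (d+1)` by any prescribed factor.
-/

namespace CIT

open Finset

lemma dMax_eq_logb_of_isGreatest {X : Type*} [Fintype X] {p q : X → ℝ} {ρ : ℝ}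
    (h : suppLe p q) (hρ : IsGreatest {r | ∃ x, p x ≠ 0 ∧ r = p x / q x} ρ) :
    dMax p q = (Real.logb 2 ρ : ℝ) := by
  rw [dMax, if_pos h, hρ.csSup_eq]

section Copy

variable {X Y : Type*} [DecidableEq X]

/-- The law of `(X, Y, X)` when `(X, Y) ∼ π`. -/
def copyX (π : X × Y → ℝ) : X × Y × X → ℝ :=
  fun s => if s.2.2 = s.1 then π (s.1, s.2.1) else 0

variable (π : X × Y → ℝ)

@[simp] lemma copyX_apply (x : X) (y : Y) (z : X) :
    copyX π (x, y, z) = if z = x then π (x, y) else 0 := rfl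

@[simp] lemma margXY_copyX [Fintype X] : margXY (copyX π) = π := by
  ext ⟨x, y⟩; simp [margXY]

@[simp] lemma margYZ_copyX [Fintype X] (y : Y) (z : X) :
    margYZ (copyX π) (y, z) = π (z, y) := by
  simp [margYZ]

@[simp] lemma margY_copyX [Fintype X] (y : Y) : margY (copyX π) y = ∑ x, π (x, y) := by
  simp [margY]

lemma isDist_copyX [Fintype X] [Fintype Y] (h : IsDist π) : IsDist (copyX π) := by
  refine ⟨fun ⟨x, y, z⟩ => ?_, ?_⟩
  · simp only [copyX_apply]; split_ifs <;> simp [h.1]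
  · rw [← h.2]
    simp [Fintype.sum_prod_type]

/-- `I(X:X|Y) = H(X|Y)`. -/
lemma cmi_copyX [Fintype X] [Fintype Y] :
    cmi (copyX π) = ∑ t : X × Y, π t * Real.logb 2 ((∑ x, π (x, t.2)) / π t) := by
  simp only [cmi, Fintype.sum_prod_type]
  refine sum_congr rfl fun x _ => sum_congr rfl fun y _ => ?_
  simp only [copyX_apply, margY_copyX, margYZ_copyX, margXY_copyX]
  rw [sum_eq_single x (fun z _ hz => by simp [hz]) (by simp)]
  by_cases h0 : π (x, y) = 0
  · simp [h0]
  · simp only [if_true, mul_div_mul_left _ _ h0]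

end Copy

lemma one_le_sq_div_sq_sub_add_one {d : ℝ} (hd : 1 ≤ d) : 1 ≤ d ^ 2 / (d ^ 2 - d + 1) := by
  rw [one_le_div (by nlinarith)]; linarith

lemma log_sq_div_sq_sub_add_one_le {d : ℝ} (hd : 1 ≤ d) :
    Real.log (d ^ 2 / (d ^ 2 - d + 1)) ≤ 2 / (d + 1) := by
  have hden : 0 < d ^ 2 - d + 1 := by nlinarith
  calc Real.log (d ^ 2 / (d ^ 2 - d + 1)) ≤ d ^ 2 / (d ^ 2 - d + 1) - 1 :=
        Real.log_le_sub_one_of_pos (by positivity)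
    _ ≤ 2 / (d + 1) := by
        rw [div_sub_one hden.ne', div_le_div_iff₀ hden (by positivity)]; nlinarith

lemma mul_logb_sq_div_lt (κ : ℝ) {d : ℝ} (hd : 2 ≤ d) (hκ : 2 * κ < Real.log d) :
    κ * Real.logb 2 (d ^ 2 / (d ^ 2 - d + 1)) < (d + 1)⁻¹ * Real.logb 2 d := by
  have hρ := Real.log_nonneg (one_le_sq_div_sq_sub_add_one (by linarith : 1 ≤ d))
  have hρ' := log_sq_div_sq_sub_add_one_le (by linarith : 1 ≤ d)
  rw [le_div_iff₀ (by linarith)] at hρ'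
  rw [Real.logb, Real.logb, ← mul_div_assoc, ← mul_div_assoc,
    div_lt_div_iff_of_pos_right (Real.log_pos one_lt_two), inv_mul_eq_div,
    lt_div_iff₀ (by linarith)]
  rcases le_or_gt κ 0 with hκ0 | hκ0
  · have hlog : 0 < Real.log d := Real.log_pos (by linarith)
    nlinarith [mul_nonneg (neg_nonneg.2 hκ0) (mul_nonneg hρ (by linarith : (0 : ℝ) ≤ d + 1))]
  · nlinarith [mul_le_mul_of_nonneg_left hρ' hκ0.le]

section Erasure

variable (d : ℕ)

/-- `Fin.last d` is the erasure symbol; an unerased `x : Fin d` is seen as `x.castSucc`. -/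
def erasurePair (t : Fin d × Fin (d + 1)) : ℝ :=
  Fin.lastCases ((d : ℝ) * (d + 1))⁻¹
    (fun j => if j = t.1 then ((d : ℝ) + 1)⁻¹ else 0) t.2

def recovery (y : Fin (d + 1)) (w : Fin (d + 1) × Fin d) : ℝ :=
  Fin.lastCases
    (Fin.lastCases 0 (fun i => if i = w.2 then (d : ℝ)⁻¹ else 0) w.1)
    (fun j => if w.2 = j then
      Fin.lastCases (d : ℝ)⁻¹ (fun i => if i = j then 1 - (d : ℝ)⁻¹ else 0) w.1 else 0)
    y

@[simp] lemma erasurePair_last (x : Fin d) :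
    erasurePair d (x, Fin.last d) = ((d : ℝ) * (d + 1))⁻¹ := by
  simp [erasurePair]

@[simp] lemma erasurePair_castSucc (x j : Fin d) :
    erasurePair d (x, j.castSucc) = if j = x then ((d : ℝ) + 1)⁻¹ else 0 := by
  simp [erasurePair]

@[simp] lemma recovery_last (w : Fin (d + 1) × Fin d) :
    recovery d (Fin.last d) w =
      Fin.lastCases 0 (fun i => if i = w.2 then (d : ℝ)⁻¹ else 0) w.1 := by
  simp [recovery]

@[simp] lemma recovery_castSucc (j : Fin d) (w : Fin (d + 1) × Fin d) :
    recovery d j.castSucc w = if w.2 = j then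
      Fin.lastCases (d : ℝ)⁻¹ (fun i => if i = j then 1 - (d : ℝ)⁻¹ else 0) w.1 else 0 := by
  simp [recovery]

lemma sum_erasurePair_fst (hd : d ≠ 0) (y : Fin (d + 1)) :
    ∑ x, erasurePair d (x, y) = ((d : ℝ) + 1)⁻¹ := by
  induction y using Fin.lastCases with
  | last =>
    simp only [erasurePair_last, sum_const, card_univ, Fintype.card_fin, nsmul_eq_mul]
    field_simp
  | cast j => simp

lemma isDist_erasurePair (hd : d ≠ 0) : IsDist (erasurePair d) := by
  refine ⟨fun ⟨x, y⟩ => ?_, ?_⟩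
  · induction y using Fin.lastCases with
    | last => simp only [erasurePair_last]; positivity
    | cast j => simp only [erasurePair_castSucc]; split_ifs <;> positivity
  · rw [Fintype.sum_prod_type_right]
    simp [sum_erasurePair_fst d hd, Nat.cast_add_one_ne_zero]

lemma isChannel_recovery (hd : d ≠ 0) : IsChannel (recovery d) := by
  have hinv : (d : ℝ)⁻¹ ≤ 1 :=
    inv_le_one_of_one_le₀ (by exact_mod_cast Nat.one_le_iff_ne_zero.mpr hd)
  intro y
  induction y using Fin.lastCases with
  | last =>
    refine ⟨fun ⟨y', z⟩ => ?_, ?_⟩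
    · induction y' using Fin.lastCases with
      | last => simp
      | cast i =>
        simp only [recovery_last, Fin.lastCases_castSucc]; split_ifs <;> positivity
    · rw [Fintype.sum_prod_type]
      simp [Fin.sum_univ_castSucc, hd]
  | cast j =>
    refine ⟨fun ⟨y', z⟩ => ?_, ?_⟩
    · induction y' using Fin.lastCases with
      | last => simp only [recovery_castSucc, Fin.lastCases_last]; split_ifs <;> positivity
      | cast i => simp only [recovery_castSucc, Fin.lastCases_castSucc]; split_ifs <;> linarith
    · rw [Fintype.sum_prod_type]
      simp [Fin.sum_univ_castSucc]

lemma sum_recovery_apply (w : Fin (d + 1) × Fin d) :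
    ∑ y, recovery d y w = Fin.lastCases (d : ℝ)⁻¹ (fun i => if i = w.2 then 1 else 0) w.1 := by
  obtain ⟨y', z⟩ := w
  induction y' using Fin.lastCases with
  | last => simp [Fin.sum_univ_castSucc]
  | cast i => by_cases h : i = z <;> simp [Fin.sum_univ_castSucc, h]

lemma chanOnDist_recovery (hd : d ≠ 0) :
    chanOnDist (recovery d) (margY (copyX (erasurePair d))) =
      margYZ (copyX (erasurePair d)) := by
  ext ⟨y', z⟩
  simp only [chanOnDist, margY_copyX, sum_erasurePair_fst d hd, ← mul_sum, sum_recovery_apply,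
    margYZ_copyX]
  induction y' using Fin.lastCases with
  | last => simp
  | cast i => simp

lemma cmi_copyX_erasurePair (hd : d ≠ 0) :
    cmi (copyX (erasurePair d)) = ((d : ℝ) + 1)⁻¹ * Real.logb 2 d := by
  have row (x : Fin d) :
      ∑ y, erasurePair d (x, y) * Real.logb 2 (((d : ℝ) + 1)⁻¹ / erasurePair d (x, y)) =
        ((d : ℝ) * (d + 1))⁻¹ * Real.logb 2 d := by
    simp [Fin.sum_univ_castSucc, Nat.cast_add_one_ne_zero, div_mul_cancel_left₀]
  rw [cmi_copyX, Fintype.sum_prod_type]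
  simp only [sum_erasurePair_fst d hd, row, sum_const, card_univ, Fintype.card_fin, nsmul_eq_mul]
  field_simp

lemma copyX_erasurePair_ne_zero {s : Fin d × Fin (d + 1) × Fin d}
    (hs : copyX (erasurePair d) s ≠ 0) : ∃ x, s = (x, x.castSucc, x) ∨ s = (x, Fin.last d, x) := by
  obtain ⟨x, y, z⟩ := s
  simp only [copyX_apply, ne_eq, ite_eq_right_iff, Classical.not_imp] at hs
  obtain ⟨rfl, hs⟩ := hs
  refine ⟨z, ?_⟩
  induction y using Fin.lastCases with
  | last => simp
  | cast j => simp_all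

lemma applyChan_recovery_erasurePair (x : Fin d) (w : Fin (d + 1) × Fin d) :
    applyChan (recovery d) (erasurePair d) (x, w) =
      ((d : ℝ) + 1)⁻¹ * recovery d x.castSucc w +
        ((d : ℝ) * (d + 1))⁻¹ * recovery d (Fin.last d) w := by
  simp [applyChan, Fin.sum_univ_castSucc, -recovery_castSucc, -recovery_last]

lemma applyChan_recovery_castSucc (hd : d ≠ 0) (x : Fin d) :
    applyChan (recovery d) (erasurePair d) (x, x.castSucc, x) =
      ((d : ℝ) ^ 2 - d + 1) / ((d : ℝ) ^ 2 * (d + 1)) := by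
  simp only [applyChan_recovery_erasurePair, recovery_castSucc, recovery_last,
    Fin.lastCases_castSucc, ↓reduceIte]
  field_simp

lemma applyChan_recovery_last (x : Fin d) :
    applyChan (recovery d) (erasurePair d) (x, Fin.last d, x) = ((d : ℝ) * (d + 1))⁻¹ := by
  simp [applyChan_recovery_erasurePair]

lemma dMax_copyX_erasurePair (hd : d ≠ 0) :
    dMax (copyX (erasurePair d)) (applyChan (recovery d) (margXY (copyX (erasurePair d)))) =
      (Real.logb 2 ((d : ℝ) ^ 2 / ((d : ℝ) ^ 2 - d + 1)) : ℝ) := by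
  have hd1 : (1 : ℝ) ≤ d := by exact_mod_cast Nat.one_le_iff_ne_zero.mpr hd
  have hden : (0 : ℝ) < (d : ℝ) ^ 2 - d + 1 := by nlinarith
  rw [margXY_copyX]
  have ratio_castSucc (x : Fin d) :
      copyX (erasurePair d) (x, x.castSucc, x) / applyChan (recovery d) (erasurePair d)
        (x, x.castSucc, x) = (d : ℝ) ^ 2 / ((d : ℝ) ^ 2 - d + 1) := by
    rw [applyChan_recovery_castSucc d hd, copyX_apply, if_pos rfl, erasurePair_castSucc,
      if_pos rfl]
    field_simp
  have ratio_last (x : Fin d) :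
      copyX (erasurePair d) (x, Fin.last d, x) / applyChan (recovery d) (erasurePair d)
        (x, Fin.last d, x) = 1 := by
    rw [applyChan_recovery_last]
    simp [hd, Nat.cast_add_one_ne_zero]
  let x₀ : Fin d := ⟨0, Nat.pos_of_ne_zero hd⟩
  have hx₀ : copyX (erasurePair d) (x₀, x₀.castSucc, x₀) ≠ 0 := by
    simp only [copyX_apply, erasurePair_castSucc, if_true]; positivity
  refine dMax_eq_logb_of_isGreatest ?_ ⟨⟨_, hx₀, (ratio_castSucc x₀).symm⟩, ?_⟩
  · intro s hs
    obtain ⟨x, rfl | rfl⟩ := copyX_erasurePair_ne_zero d hs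
    · rw [applyChan_recovery_castSucc d hd]; exact (div_pos hden (by positivity)).ne'
    · rw [applyChan_recovery_last]; positivity
  · rintro r ⟨s, hs, rfl⟩
    obtain ⟨x, rfl | rfl⟩ := copyX_erasurePair_ne_zero d hs
    · rw [ratio_castSucc]
    · rw [ratio_last]; exact one_le_sq_div_sq_sub_add_one hd1

end Erasure

end CIT

open CIT in
/-- for every constant `κ` there is a tripartite distribution
`P` and a channel `R` from `Y` to `Y×Z` with `R(P_Y) = P_YZ` such that
`κ · D_max(P ‖ (id⊗R)(P_XY)) < I(X:Z|Y)_P`. -/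
theorem large_cmi_good_recovery (κ : ℝ) :
    ∃ (nx ny nz : ℕ) (P : Fin nx × Fin ny × Fin nz → ℝ)
      (R : Fin ny → Fin ny × Fin nz → ℝ),
      IsDist P ∧ IsChannel R ∧ chanOnDist R (margY P) = margYZ P ∧
        (κ : EReal) * dMax P (applyChan R (margXY P)) < ((cmi P : ℝ) : EReal) := by
  obtain ⟨d, hd, hκd⟩ : ∃ d : ℕ, 2 ≤ d ∧ 2 * κ < Real.log d :=
    ((Filter.eventually_ge_atTop 2).and ((Real.tendsto_log_atTop.comp
      tendsto_natCast_atTop_atTop).eventually_gt_atTop (2 * κ))).exists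
  have hd0 : d ≠ 0 := by omega
  refine ⟨d, d + 1, d, copyX (erasurePair d), recovery d,
    isDist_copyX _ (isDist_erasurePair d hd0), isChannel_recovery d hd0,
    chanOnDist_recovery d hd0, ?_⟩
  rw [dMax_copyX_erasurePair d hd0, cmi_copyX_erasurePair d hd0, ← EReal.coe_mul,
    EReal.coe_lt_coe_iff]
  exact mul_logb_sq_div_lt κ (by exact_mod_cast hd) hκd
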